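/- arXiv:2408.05197 — 9 statements merged into one kernel-verified Lean document; each statement's English description precedes it below -/
import Mathlib

section
/- Let H be a real inner product space with two inner products ⟨·,·⟩_B and ⟨·,·⟩_L (with induced norms ‖·‖_B and ‖·‖_L). Suppose u, v ∈ H with v ≠ 0 satisfy ⟨v, φ⟩_B = R(u) ⟨u, φ⟩_L for all φ ∈ H, where R(w) := ‖w‖_B² / ‖w‖_L² for w ≠ 0. Then R(v) ‖v‖_L ≤ R(u) ‖u‖_L. -/
/-!
Write `R = R(u)`. Testing the iteration identity with `φ = v` gives `‖v‖_B² = R ⟨u, v⟩_L`, so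
`R(v) ‖v‖_L = R ⟨u, v⟩_L / ‖v‖_L`, and the claim is `R` times the Cauchy–Schwarz inequality
`⟨u, v⟩_L ≤ ‖u‖_L ‖v‖_L`.
-/

namespace LinearMap.BilinForm

variable {M : Type*} [AddCommGroup M] [Module ℝ M]

lemma apply_self_nonneg_of_pos (B : LinearMap.BilinForm ℝ M) (hB : ∀ x, x ≠ 0 → 0 < B x x)
    (x : M) : 0 ≤ B x x := by
  rcases eq_or_ne x 0 with rfl | hx
  · simp
  · exact (hB x hx).le

lemma apply_le_sqrt_mul_sqrt (B : LinearMap.BilinForm ℝ M) (hs : ∀ x, 0 ≤ B x x)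
    (hB : ∀ x y, B x y = B y x) (x y : M) : B x y ≤ √(B x x) * √(B y y) := by
  have hsq : B x y ^ 2 ≤ B x x * B y y :=
    B.apply_sq_le_of_symm hs (LinearMap.isSymm_def.2 hB) x y
  rw [← Real.sqrt_mul (hs x)]
  exact (le_abs_self _).trans (Real.abs_le_sqrt hsq)

end LinearMap.BilinForm

lemma div_mul_sqrt_le_of_le_sqrt_mul_sqrt {a b c : ℝ} (hb : 0 ≤ b) (h : c ≤ √a * √b) :
    c / b * √b ≤ √a := by
  rcases hb.eq_or_lt with rfl | hb
  · simp
  have hsb : 0 < √b := Real.sqrt_pos.2 hb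
  calc c / b * √b = c / √b := by
        nth_rewrite 1 [← Real.mul_self_sqrt hb.le]
        field_simp
    _ ≤ √a := (div_le_iff₀ hsb).2 h

theorem stmt_0_general {V : Type*} [AddCommGroup V] [Module ℝ V]
    (B L : LinearMap.BilinForm ℝ V)
    (hLsymm : ∀ x y, L x y = L y x)
    (hBpos : ∀ x, x ≠ 0 → 0 < B x x) (hLpos : ∀ x, x ≠ 0 → 0 < L x x)
    (u v : V)
    (hiter : ∀ φ : V, B v φ = (B u u / L u u) * L u φ) :
    (B v v / L v v) * Real.sqrt (L v v) ≤ (B u u / L u u) * Real.sqrt (L u u) := by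
  have hL := L.apply_self_nonneg_of_pos hLpos
  have hR : 0 ≤ B u u / L u u := div_nonneg (B.apply_self_nonneg_of_pos hBpos u) (hL u)
  have hCS : L u v ≤ √(L u u) * √(L v v) := L.apply_le_sqrt_mul_sqrt hL hLsymm u v
  calc B v v / L v v * √(L v v) = B u u / L u u * (L u v / L v v * √(L v v)) := by
        rw [hiter v]; ring
    _ ≤ B u u / L u u * √(L u u) :=
        mul_le_mul_of_nonneg_left (div_mul_sqrt_le_of_le_sqrt_mul_sqrt (hL v) hCS) hR

/-- Inverse iteration step decreases the product R(·)‖·‖_L :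
if ⟨v, φ⟩_B = R(u) ⟨u, φ⟩_L for all φ, then R(v)‖v‖_L ≤ R(u)‖u‖_L. -/
theorem stmt_0 {V : Type*} [AddCommGroup V] [Module ℝ V]
    (B L : LinearMap.BilinForm ℝ V)
    (hBsymm : ∀ x y, B x y = B y x) (hLsymm : ∀ x y, L x y = L y x)
    (hBpos : ∀ x, x ≠ 0 → 0 < B x x) (hLpos : ∀ x, x ≠ 0 → 0 < L x x)
    (u v : V) (hu : u ≠ 0) (hv : v ≠ 0)
    (hiter : ∀ φ : V, B v φ = (B u u / L u u) * L u φ) :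
    (B v v / L v v) * Real.sqrt (L v v) ≤ (B u u / L u u) * Real.sqrt (L u u) :=
  stmt_0_general B L hLsymm hBpos hLpos u v hiter
end

section
/- Let H be a real vector space with two inner products ⟨·,·⟩_B and ⟨·,·⟩_L. If u, v ∈ H are nonzero and ⟨v, φ⟩_B = R(u) ⟨u, φ⟩_L for all φ ∈ H, where R(w) = ‖w‖_B²/‖w‖_L², then ‖v‖_B ≥ ‖u‖_B. -/
/-- Inverse iteration step increases the B-norm: ‖v‖_B ≥ ‖u‖_B. -/
theorem stmt_1 {V : Type*} [AddCommGroup V] [Module ℝ V]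
    (B L : LinearMap.BilinForm ℝ V)
    (hBsymm : ∀ x y, B x y = B y x) (hLsymm : ∀ x y, L x y = L y x)
    (hBpos : ∀ x, x ≠ 0 → 0 < B x x) (hLpos : ∀ x, x ≠ 0 → 0 < L x x)
    (u v : V) (hu : u ≠ 0) (hv : v ≠ 0)
    (hiter : ∀ φ : V, B v φ = (B u u / L u u) * L u φ) :
    Real.sqrt (B u u) ≤ Real.sqrt (B v v) := by
  have hLu : L u u ≠ 0 := (hLpos u hu).ne'
  have hvu : B v u = B u u := by
    rw [hiter u, div_mul_cancel₀ _ hLu]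
  have hnn : 0 ≤ B (v - u) (v - u) := by
    rcases eq_or_ne (v - u) 0 with h | h
    · rw [h]; simp
    · exact (hBpos _ h).le
  have hexp : B (v - u) (v - u) = B v v - 2 * B u u + B u u := by
    simp only [map_sub, LinearMap.sub_apply]
    rw [hBsymm u v, hvu]
    ring
  have : B u u ≤ B v v := by nlinarith
  exact Real.sqrt_le_sqrt this
end

section
/- Let H be a real vector space with two inner products ⟨·,·⟩_B and ⟨·,·⟩_L. If u, v ∈ H are nonzero and ⟨v, φ⟩_B = R(u) ⟨u, φ⟩_L for all φ ∈ H, where R(w) = ‖w‖_B²/‖w‖_L², then ‖v‖_L ≥ ‖u‖_L and R(v) ≤ R(u). -/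
lemma cs_aux {V : Type*} [AddCommGroup V] [Module ℝ V]
    (P : LinearMap.BilinForm ℝ V)
    (hsymm : ∀ x y, P x y = P y x) (hpos : ∀ x, x ≠ 0 → 0 < P x x)
    (x y : V) : (P x y)^2 ≤ P x x * P y y := by
  have hnonneg : ∀ z, 0 ≤ P z z := by
    intro z
    by_cases hz : z = 0
    · simp [hz]
    · exact (hpos z hz).le
  by_cases hy : y = 0
  · simp [hy, hnonneg x]
  · have hyy : 0 < P y y := hpos y hy
    set t : ℝ := P x y / P y y with ht
    have h0 := hnonneg (x - t • y)
    have hexp : P (x - t • y) (x - t • y)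
        = P x x - t * P x y - t * P y x + t * t * P y y := by
      simp [LinearMap.BilinForm.sub_left, LinearMap.BilinForm.sub_right,
        LinearMap.BilinForm.smul_left, LinearMap.BilinForm.smul_right]
      ring
    rw [hexp] at h0
    have hsym := hsymm x y
    have hne : P y y ≠ 0 := ne_of_gt hyy
    have htmul : t * P y y = P x y := div_mul_cancel₀ _ hne
    have h2 := mul_nonneg h0 hyy.le
    have heq : (P x x - t * P x y - t * P y x + t * t * P y y) * P y y
        = P x x * P y y - (P x y)^2 := by
      rw [← hsym]
      linear_combination (t * P y y - P x y) * htmul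
    rw [heq] at h2
    linarith

/-- Inverse iteration step: ‖v‖_L ≥ ‖u‖_L and R(v) ≤ R(u). -/
theorem stmt_2 {V : Type*} [AddCommGroup V] [Module ℝ V]
    (B L : LinearMap.BilinForm ℝ V)
    (hBsymm : ∀ x y, B x y = B y x) (hLsymm : ∀ x y, L x y = L y x)
    (hBpos : ∀ x, x ≠ 0 → 0 < B x x) (hLpos : ∀ x, x ≠ 0 → 0 < L x x)
    (u v : V) (hu : u ≠ 0) (hv : v ≠ 0)
    (hiter : ∀ φ : V, B v φ = (B u u / L u u) * L u φ) :
    Real.sqrt (L u u) ≤ Real.sqrt (L v v) ∧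
      B v v / L v v ≤ B u u / L u u := by
  have hBuu : 0 < B u u := hBpos u hu
  have hLuu : 0 < L u u := hLpos u hu
  have hBvv : 0 < B v v := hBpos v hv
  have hLvv : 0 < L v v := hLpos v hv
  set R : ℝ := B u u / L u u with hR
  have hRpos : 0 < R := div_pos hBuu hLuu
  -- B v u = R * L u u = B u u
  have hBvu : B v u = B u u := by
    have := hiter u
    rw [this, hR]; field_simp
  -- B v v = R * L u v
  have hBvvEq : B v v = R * L u v := hiter v
  -- Cauchy-Schwarz for B: (B u v)^2 ≤ B u u * B v v
  have hcsB := cs_aux B hBsymm hBpos u v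
  have hBuv : B u v = B u u := by rw [hBsymm u v, hBvu]
  rw [hBuv] at hcsB
  -- B u u ≤ B v v
  have hBle : B u u ≤ B v v := by nlinarith
  -- L u v ≥ L u u
  have hLuv : L u u ≤ L u v := by
    rw [hBvvEq, hR] at hBle
    rw [div_mul_eq_mul_div, le_div_iff₀ hLuu] at hBle
    nlinarith
  have hLuvpos : 0 < L u v := lt_of_lt_of_le hLuu hLuv
  -- Cauchy-Schwarz for L
  have hcsL := cs_aux L hLsymm hLpos u v
  -- L u u ≤ L v v
  have hLle : L u u ≤ L v v := by nlinarith
  constructor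
  · exact Real.sqrt_le_sqrt hLle
  · -- R(v) = R * L u v / L v v ≤ R since L u v ^2 ≤ L u u * L v v and L u u ≤ L u v
    rw [hBvvEq, div_le_iff₀ hLvv]
    have : L u v * L u v ≤ L u v * L v v := by nlinarith
    nlinarith
end

section
/- Let H be a real vector space with two inner products B and L, and suppose λ₁ > 0 satisfies λ₁ ≤ R(w) = ‖w‖_B²/‖w‖_L² for all nonzero w ∈ H. Let (u_k) be a sequence of nonzero elements of H satisfying ⟨u_{k+1}, φ⟩_B = R(u_k) ⟨u_k, φ⟩_L for all φ ∈ H and all k. Then for all k ≥ 1: ‖u_k‖_L ≤ (R(u_0)/λ₁) ‖u_0‖_L and ‖u_k‖_B² ≤ (R(u_0)³/λ₁²) ‖u_0‖_L². -/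
/-!
Write `R(w) = ‖w‖_B² / ‖w‖_L²`. Testing the iteration against `φ = u_{k+1}` and applying
Cauchy–Schwarz for `L` gives `‖u_{k+1}‖_B² ≤ R(u_k) ‖u_k‖_L ‖u_{k+1}‖_L`, so the quantity
`R(u_k)² ‖u_k‖_L²` does not increase along the iteration. Since `R(u_k) ≥ λ₁`, it controls both
`λ₁² ‖u_k‖_L²` and `λ₁ ‖u_k‖_B² = λ₁ R(u_k) ‖u_k‖_L²`.
-/

theorem sqrt_le_div_mul_sqrt_of_sq_mul_le {a b x y : ℝ} (ha : 0 < a) (hb : 0 ≤ b)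
    (h : a ^ 2 * x ≤ b ^ 2 * y) : √x ≤ b / a * √y := by
  rw [← Real.sqrt_sq (div_nonneg hb ha.le), ← Real.sqrt_mul (sq_nonneg _)]
  refine Real.sqrt_le_sqrt ?_
  rwa [div_pow, div_mul_eq_mul_div, le_div_iff₀ (by positivity), mul_comm]

theorem le_pow_three_div_sq_mul_of_mul_le {a b x y : ℝ} (ha : 0 < a) (hab : a ≤ b) (hy : 0 ≤ y)
    (h : a * x ≤ b ^ 2 * y) : x ≤ b ^ 3 / a ^ 2 * y :=
  calc x ≤ b ^ 2 * y / a := (le_div_iff₀' ha).2 h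
    _ ≤ b / a * (b ^ 2 * y / a) := le_mul_of_one_le_left (by positivity) ((one_le_div ha).2 hab)
    _ = b ^ 3 / a ^ 2 * y := by ring

namespace LinearMap.BilinForm

variable {V : Type*} [AddCommGroup V] [Module ℝ V] {B L : LinearMap.BilinForm ℝ V}

noncomputable def rayleighQuotient (B L : LinearMap.BilinForm ℝ V) (w : V) : ℝ := B w w / L w w

theorem mul_le_rayleighQuotient_sq_mul {lam : ℝ} {w : V} (hlam : 0 ≤ lam)
    (hw : 0 < L w w) (h : lam ≤ B.rayleighQuotient L w) :
    lam * B w w ≤ B.rayleighQuotient L w ^ 2 * L w w :=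
  calc lam * B w w = lam * B.rayleighQuotient L w * L w w := by
        rw [mul_assoc, rayleighQuotient, div_mul_cancel₀ _ hw.ne']
    _ ≤ B.rayleighQuotient L w ^ 2 * L w w := by rw [sq]; gcongr; exact hlam.trans h

theorem rayleighQuotient_sq_mul_le_of_step (hL : L.IsPosSemidef)
    {u v : V} (hstep : ∀ φ, B v φ = B.rayleighQuotient L u * L u φ) :
    B.rayleighQuotient L v ^ 2 * L v v ≤ B.rayleighQuotient L u ^ 2 * L u u := by
  set R := B.rayleighQuotient L u
  rcases (hL.nonneg v).eq_or_lt with hv | hv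
  · rw [← hv, mul_zero]
    exact mul_nonneg (sq_nonneg R) (hL.nonneg u)
  have hcs : L u v ^ 2 ≤ L u u * L v v :=
    L.apply_sq_le_of_symm hL.nonneg (isSymm_iff.1 hL.isSymm) u v
  have hsq : B v v ^ 2 ≤ R ^ 2 * L u u * L v v := by
    rw [hstep v, mul_pow, mul_assoc]
    exact mul_le_mul_of_nonneg_left hcs (sq_nonneg R)
  calc B.rayleighQuotient L v ^ 2 * L v v = B v v ^ 2 / L v v := by
        rw [rayleighQuotient]; field_simp
    _ ≤ R ^ 2 * L u u := (div_le_iff₀ hv).2 hsq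

theorem antitone_rayleighQuotient_sq_mul (hL : L.IsPosSemidef)
    {u : ℕ → V} (hiter : ∀ k φ, B (u (k + 1)) φ = B.rayleighQuotient L (u k) * L (u k) φ) :
    Antitone fun k ↦ B.rayleighQuotient L (u k) ^ 2 * L (u k) (u k) :=
  antitone_nat_of_succ_le fun k ↦ rayleighQuotient_sq_mul_le_of_step hL (hiter k)

end LinearMap.BilinForm

theorem stmt_3_general {V : Type*} [AddCommGroup V] [Module ℝ V]
    (B L : LinearMap.BilinForm ℝ V)
    (hLsymm : ∀ x y, L x y = L y x)
    (hLpos : ∀ x, x ≠ 0 → 0 < L x x)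
    (lam : ℝ) (hlam : 0 < lam)
    (hlow : ∀ w : V, w ≠ 0 → lam ≤ B w w / L w w)
    (u : ℕ → V) (hne : ∀ k, u k ≠ 0)
    (hiter : ∀ k, ∀ φ : V,
      B (u (k + 1)) φ = (B (u k) (u k) / L (u k) (u k)) * L (u k) φ) :
    ∀ k ≥ 1,
      Real.sqrt (L (u k) (u k)) ≤
        (B (u 0) (u 0) / L (u 0) (u 0)) / lam * Real.sqrt (L (u 0) (u 0)) ∧
      B (u k) (u k) ≤
        (B (u 0) (u 0) / L (u 0) (u 0)) ^ 3 / lam ^ 2 * L (u 0) (u 0) := by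
  have hL : L.IsPosSemidef := ⟨⟨hLsymm⟩, ⟨fun x ↦ by
    rcases eq_or_ne x 0 with rfl | hx
    exacts [by simp, (hLpos x hx).le]⟩⟩
  intro k _
  have hl : 0 < L (u k) (u k) := hLpos _ (hne k)
  have hR : lam ≤ B.rayleighQuotient L (u k) := hlow _ (hne k)
  have hR₀ : lam ≤ B.rayleighQuotient L (u 0) := hlow _ (hne 0)
  have hE := LinearMap.BilinForm.antitone_rayleighQuotient_sq_mul hL hiter (Nat.zero_le k)
  have hlR : lam ^ 2 * L (u k) (u k) ≤ B.rayleighQuotient L (u k) ^ 2 * L (u k) (u k) := by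
    gcongr
  exact ⟨sqrt_le_div_mul_sqrt_of_sq_mul_le hlam (hlam.le.trans hR₀) (hlR.trans hE),
    le_pow_three_div_sq_mul_of_mul_le hlam hR₀ (hLpos _ (hne 0)).le
      ((LinearMap.BilinForm.mul_le_rayleighQuotient_sq_mul hlam.le hl hR).trans hE)⟩

/-- Uniform bounds on the inverse iteration sequence:
‖u_k‖_L ≤ (R(u₀)/λ₁)‖u₀‖_L and ‖u_k‖_B² ≤ (R(u₀)³/λ₁²)‖u₀‖_L² for k ≥ 1. -/
theorem stmt_3 {V : Type*} [AddCommGroup V] [Module ℝ V]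
    (B L : LinearMap.BilinForm ℝ V)
    (hBsymm : ∀ x y, B x y = B y x) (hLsymm : ∀ x y, L x y = L y x)
    (hBpos : ∀ x, x ≠ 0 → 0 < B x x) (hLpos : ∀ x, x ≠ 0 → 0 < L x x)
    (lam : ℝ) (hlam : 0 < lam)
    (hlow : ∀ w : V, w ≠ 0 → lam ≤ B w w / L w w)
    (u : ℕ → V) (hne : ∀ k, u k ≠ 0)
    (hiter : ∀ k, ∀ φ : V,
      B (u (k + 1)) φ = (B (u k) (u k) / L (u k) (u k)) * L (u k) φ) :
    ∀ k ≥ 1,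
      Real.sqrt (L (u k) (u k)) ≤
        (B (u 0) (u 0) / L (u 0) (u 0)) / lam * Real.sqrt (L (u 0) (u 0)) ∧
      B (u k) (u k) ≤
        (B (u 0) (u 0) / L (u 0) (u 0)) ^ 3 / lam ^ 2 * L (u 0) (u 0) :=
  stmt_3_general B L hLsymm hLpos lam hlam hlow u hne hiter
end

section
/- Let H be a real vector space with two inner products B and L, let λ₁ > 0 with λ₁ ≤ R(w) for all nonzero w, and suppose w̄ ∈ H is a nonzero 'eigenvector': ⟨w̄, φ⟩_B = λ₁ ⟨w̄, φ⟩_L for all φ ∈ H. Let (u_k) be nonzero iterates with ⟨u_{k+1}, φ⟩_B = R(u_k) ⟨u_k, φ⟩_L for all φ, and suppose α_k := ⟨u_k, w̄⟩_L > 0 for all k and the sequence (α_k) is bounded above. Then lim_{k→∞} R(u_k) = λ₁. -/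
/-- Convergence of the Rayleigh quotients of the inverse iterates to λ₁. -/
theorem stmt_4 {V : Type*} [AddCommGroup V] [Module ℝ V]
    (B L : LinearMap.BilinForm ℝ V)
    (hBsymm : ∀ x y, B x y = B y x) (hLsymm : ∀ x y, L x y = L y x)
    (hBpos : ∀ x, x ≠ 0 → 0 < B x x) (hLpos : ∀ x, x ≠ 0 → 0 < L x x)
    (lam : ℝ) (hlam : 0 < lam)
    (hlow : ∀ w : V, w ≠ 0 → lam ≤ B w w / L w w)
    (wbar : V) (hwbar : wbar ≠ 0)
    (heig : ∀ φ : V, B wbar φ = lam * L wbar φ)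
    (u : ℕ → V) (hne : ∀ k, u k ≠ 0)
    (hiter : ∀ k, ∀ φ : V,
      B (u (k + 1)) φ = (B (u k) (u k) / L (u k) (u k)) * L (u k) φ)
    (hαpos : ∀ k, 0 < L (u k) wbar)
    (hαbdd : ∃ M : ℝ, ∀ k, L (u k) wbar ≤ M) :
    Filter.Tendsto (fun k => B (u k) (u k) / L (u k) (u k))
      Filter.atTop (nhds lam) := by
  set a : ℕ → ℝ := fun k => L (u k) wbar with ha_def
  set R : ℕ → ℝ := fun k => B (u k) (u k) / L (u k) (u k) with hR_def
  -- key identity: lam * a (k+1) = R k * a k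
  have hkey : ∀ k, lam * a (k + 1) = R k * a k := by
    intro k
    have h1 : B (u (k + 1)) wbar = R k * a k := hiter k wbar
    have h2 : B (u (k + 1)) wbar = lam * a (k + 1) := by
      rw [hBsymm, heig, hLsymm]
    rw [← h2, h1]
  have hRlow : ∀ k, lam ≤ R k := fun k => hlow (u k) (hne k)
  have hmono : Monotone a := by
    apply monotone_nat_of_le_succ
    intro k
    have h := hkey k
    have hak : 0 < a k := hαpos k
    nlinarith [hRlow k, hαpos (k + 1)]
  have hbdd : BddAbove (Set.range a) := by
    obtain ⟨M, hM⟩ := hαbdd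
    exact ⟨M, by rintro x ⟨k, rfl⟩; exact hM k⟩
  have hconv : Filter.Tendsto a Filter.atTop (nhds (⨆ k, a k)) :=
    tendsto_atTop_ciSup hmono hbdd
  set α := ⨆ k, a k with hα_def
  have hαpos' : 0 < α := lt_of_lt_of_le (hαpos 0) (le_ciSup hbdd 0)
  have hconv' : Filter.Tendsto (fun k => a (k + 1)) Filter.atTop (nhds α) :=
    hconv.comp (Filter.tendsto_add_atTop_nat 1)
  have heqR : ∀ k, R k = lam * a (k + 1) / a k := by
    intro k
    have hak : a k ≠ 0 := (hαpos k).ne'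
    field_simp
    linarith [hkey k]
  have : Filter.Tendsto (fun k => lam * a (k + 1) / a k) Filter.atTop
      (nhds (lam * α / α)) :=
    (hconv'.const_mul lam).div hconv hαpos'.ne'
  rw [mul_div_assoc, div_self hαpos'.ne', mul_one] at this
  exact this.congr (fun k => (heqR k).symm)
end

section
/- Let (X, σ) be a finite measure space and v : X → ℝ with |v| integrable, ∫ |v| dσ > 0. Over all measurable h : X → ℝ with h > 0 a.e. and ∫ h dσ = m (where m > 0), the infimum of ∫ v²/h dσ equals (1/m)(∫ |v| dσ)², and it is attained by h = m|v|/∫|v| dσ when v ≠ 0 a.e. -/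
/-!
By Cauchy–Schwarz, `(∫ |v|)² = (∫ (|v| / √h) · √h)² ≤ (∫ v² / h) · ∫ h`, so `(1/m) (∫ |v|)²`
is a lower bound, with equality for `h` proportional to `|v|`. That profile is admissible only
when `v ≠ 0` a.e.; in general the profiles proportional to `|v| + ε` are admissible, and by
dominated convergence their energies `(1/m) (∫ |v| + ε σ(X)) ∫ v² / (|v| + ε)` tend to the
bound as `ε → 0⁺`.
-/

open MeasureTheory Filter Topology

theorem sq_div_abs_self (a : ℝ) : a ^ 2 / |a| = |a| := by
  rw [← sq_abs, sq, mul_self_div_self]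

theorem sq_div_abs_add_le_abs (a : ℝ) {ε : ℝ} (hε : 0 ≤ ε) :
    a ^ 2 / (|a| + ε) ≤ |a| := by
  rcases eq_or_ne a 0 with rfl | ha
  · simp
  calc a ^ 2 / (|a| + ε) ≤ a ^ 2 / |a| :=
        div_le_div_of_nonneg_left (sq_nonneg a) (abs_pos.2 ha) (le_add_of_nonneg_right hε)
    _ = |a| := sq_div_abs_self a

theorem tendsto_sq_div_abs_add (a : ℝ) :
    Tendsto (fun ε => a ^ 2 / (|a| + ε)) (𝓝[>] 0) (𝓝 |a|) := by
  rcases eq_or_ne a 0 with rfl | ha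
  · simp
  have hcont : ContinuousAt (fun ε => a ^ 2 / (|a| + ε)) 0 :=
    continuousAt_const.div (continuousAt_const.add continuousAt_id) (by simpa using ha)
  simpa [sq_div_abs_self] using hcont.tendsto.mono_left nhdsWithin_le_nhds

section

variable {X : Type*} [MeasurableSpace X] {σ : Measure X}

theorem sq_integral_mul_le_integral_sq_mul_integral_sq {f g : X → ℝ} (hf₀ : 0 ≤ᵐ[σ] f)
    (hg₀ : 0 ≤ᵐ[σ] g) (hf : MemLp f 2 σ) (hg : MemLp g 2 σ) :
    (∫ x, f x * g x ∂σ) ^ 2 ≤ (∫ x, f x ^ 2 ∂σ) * ∫ x, g x ^ 2 ∂σ := by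
  have holder := integral_mul_le_Lp_mul_Lq_of_nonneg Real.HolderConjugate.two_two hf₀ hg₀
    (by simpa using hf) (by simpa using hg)
  have hF : 0 ≤ ∫ x, f x ^ 2 ∂σ := integral_nonneg fun x => sq_nonneg (f x)
  have hG : 0 ≤ ∫ x, g x ^ 2 ∂σ := integral_nonneg fun x => sq_nonneg (g x)
  have hfg : 0 ≤ ∫ x, f x * g x ∂σ := integral_nonneg_of_ae <| by
    filter_upwards [hf₀, hg₀] with x hf hg using mul_nonneg hf hg
  simp only [Real.rpow_two, ← Real.sqrt_eq_rpow] at holder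
  rw [← Real.sqrt_mul hF] at holder
  exact (Real.le_sqrt hfg (mul_nonneg hF hG)).1 holder

theorem sq_integral_abs_le_integral_sq_div_mul_integral {v h : X → ℝ} (hv : Measurable v)
    (hh : Measurable h) (hh₀ : ∀ᵐ x ∂σ, 0 < h x) (hhi : Integrable h σ)
    (hvh : Integrable (fun x => v x ^ 2 / h x) σ) :
    (∫ x, |v x| ∂σ) ^ 2 ≤ (∫ x, v x ^ 2 / h x ∂σ) * ∫ x, h x ∂σ := by
  have hf : (fun x => √(v x ^ 2 / h x) ^ 2) =ᵐ[σ] fun x => v x ^ 2 / h x := by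
    filter_upwards [hh₀] with x hx using Real.sq_sqrt (by positivity)
  have hg : (fun x => √(h x) ^ 2) =ᵐ[σ] h := by
    filter_upwards [hh₀] with x hx using Real.sq_sqrt hx.le
  have hfg : (fun x => √(v x ^ 2 / h x) * √(h x)) =ᵐ[σ] fun x => |v x| := by
    filter_upwards [hh₀] with x hx
    rw [← Real.sqrt_mul (by positivity), div_mul_cancel₀ _ hx.ne', Real.sqrt_sq_eq_abs]
  have hfL2 : MemLp (fun x => √(v x ^ 2 / h x)) 2 σ :=
    (memLp_two_iff_integrable_sq ((hv.pow_const 2).div hh).sqrt.aestronglyMeasurable).2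
      (hvh.congr hf.symm)
  have hgL2 : MemLp (fun x => √(h x)) 2 σ :=
    (memLp_two_iff_integrable_sq hh.sqrt.aestronglyMeasurable).2 (hhi.congr hg.symm)
  have cs := sq_integral_mul_le_integral_sq_mul_integral_sq
    (ae_of_all _ fun x => Real.sqrt_nonneg _) (ae_of_all _ fun x => Real.sqrt_nonneg _) hfL2 hgL2
  rwa [integral_congr_ae hfg, integral_congr_ae hf, integral_congr_ae hg] at cs

theorem tendsto_integral_sq_div_abs_add {v : X → ℝ} (hv : Measurable v) (hvi : Integrable v σ) :
    Tendsto (fun ε => ∫ x, v x ^ 2 / (|v x| + ε) ∂σ) (𝓝[>] 0) (𝓝 (∫ x, |v x| ∂σ)) :=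
  tendsto_integral_filter_of_dominated_convergence (fun x => |v x|)
    (Eventually.of_forall fun ε =>
      ((hv.pow_const 2).div (hv.abs.add_const ε)).aestronglyMeasurable)
    (eventually_mem_nhdsWithin.mono fun ε (hε : 0 < ε) => ae_of_all _ fun x => by
      rw [Real.norm_of_nonneg (div_nonneg (sq_nonneg _) (by positivity))]
      exact sq_div_abs_add_le_abs _ hε.le)
    hvi.abs (ae_of_all _ fun x => tendsto_sq_div_abs_add (v x))

variable {v : X → ℝ} {m : ℝ}

variable (σ v m) in
def insulationEnergies : Set ℝ :=
  {r | ∃ h : X → ℝ, Measurable h ∧ (∀ᵐ x ∂σ, 0 < h x) ∧ Integrable h σ ∧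
    (∫ x, h x ∂σ) = m ∧ Integrable (fun x => v x ^ 2 / h x) σ ∧ r = ∫ x, v x ^ 2 / h x ∂σ}

theorem le_of_mem_insulationEnergies (hv : Measurable v) (hm : 0 < m) {r : ℝ}
    (hr : r ∈ insulationEnergies σ v m) : 1 / m * (∫ x, |v x| ∂σ) ^ 2 ≤ r := by
  obtain ⟨h, hh, hh₀, hhi, rfl, hvh, rfl⟩ := hr
  rw [one_div_mul_eq_div, div_le_iff₀ hm]
  exact sq_integral_abs_le_integral_sq_div_mul_integral hv hh hh₀ hhi hvh

theorem integral_div_mul_integral_sq_div_mem_insulationEnergies {g : X → ℝ}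
    (hg : Measurable g) (hg₀ : ∀ᵐ x ∂σ, 0 < g x) (hgi : Integrable g σ)
    (hvg : Integrable (fun x => v x ^ 2 / g x) σ) (hG : 0 < ∫ x, g x ∂σ) (hm : 0 < m) :
    (∫ x, g x ∂σ) / m * ∫ x, v x ^ 2 / g x ∂σ ∈ insulationEnergies σ v m := by
  set G := ∫ x, g x ∂σ
  have hscale : ∀ x, v x ^ 2 / (m / G * g x) = G / m * (v x ^ 2 / g x) := fun x => by
    simp only [div_eq_mul_inv, mul_inv, inv_inv]
    ring
  refine ⟨fun x => m / G * g x, hg.const_mul _, ?_, hgi.const_mul _, ?_, ?_, ?_⟩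
  · filter_upwards [hg₀] with x hx using mul_pos (div_pos hm hG) hx
  · rw [integral_const_mul, div_mul_cancel₀ _ hG.ne']
  · simpa only [hscale] using hvg.const_mul (G / m)
  · simp only [hscale, integral_const_mul]

theorem regularized_mem_insulationEnergies [IsFiniteMeasure σ] (hv : Measurable v)
    (hvi : Integrable v σ) (hI : 0 < ∫ x, |v x| ∂σ) (hm : 0 < m) {ε : ℝ} (hε : 0 < ε) :
    (∫ x, |v x| ∂σ + ε * σ.real Set.univ) / m * ∫ x, v x ^ 2 / (|v x| + ε) ∂σ ∈
      insulationEnergies σ v m := by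
  have hG : ∫ x, (|v x| + ε) ∂σ = ∫ x, |v x| ∂σ + ε * σ.real Set.univ := by
    rw [integral_add hvi.abs (integrable_const ε), integral_const, smul_eq_mul, mul_comm]
  have hvg : Integrable (fun x => v x ^ 2 / (|v x| + ε)) σ :=
    hvi.abs.mono' ((hv.pow_const 2).div (hv.abs.add_const ε)).aestronglyMeasurable
      (ae_of_all _ fun x => by
        rw [Real.norm_of_nonneg (div_nonneg (sq_nonneg _) (by positivity))]
        exact sq_div_abs_add_le_abs _ hε.le)
  rw [← hG]
  refine integral_div_mul_integral_sq_div_mem_insulationEnergies (hv.abs.add_const ε)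
    (ae_of_all _ fun x => by positivity) (hvi.abs.add (integrable_const ε)) hvg ?_ hm
  rw [hG]
  exact add_pos_of_pos_of_nonneg hI (mul_nonneg hε.le measureReal_nonneg)

end

/-- Over positive h of total mass m, the infimum of ∫ v²/h dσ equals
(1/m)(∫|v|)², attained by h = m|v|/∫|v| when v ≠ 0 a.e. -/
theorem stmt_8 {X : Type*} [MeasurableSpace X] (σ : Measure X) [IsFiniteMeasure σ]
    (v : X → ℝ) (hvm : Measurable v)
    (hvint : Integrable (fun x => |v x|) σ)
    (hvpos : 0 < ∫ x, |v x| ∂σ)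
    (m : ℝ) (hm : 0 < m) :
    IsGLB {r : ℝ | ∃ h : X → ℝ, Measurable h ∧ (∀ᵐ x ∂σ, 0 < h x) ∧
        Integrable h σ ∧ (∫ x, h x ∂σ) = m ∧
        Integrable (fun x => v x ^ 2 / h x) σ ∧ r = ∫ x, v x ^ 2 / h x ∂σ}
      ((1 / m) * (∫ x, |v x| ∂σ) ^ 2) ∧
    ((∀ᵐ x ∂σ, v x ≠ 0) →
      (1 / m) * (∫ x, |v x| ∂σ) ^ 2 ∈
        {r : ℝ | ∃ h : X → ℝ, Measurable h ∧ (∀ᵐ x ∂σ, 0 < h x) ∧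
          Integrable h σ ∧ (∫ x, h x ∂σ) = m ∧
          Integrable (fun x => v x ^ 2 / h x) σ ∧ r = ∫ x, v x ^ 2 / h x ∂σ}) := by
  change IsGLB (insulationEnergies σ v m) _ ∧ (_ → _ ∈ insulationEnergies σ v m)
  set I := ∫ x, |v x| ∂σ
  have hvi : Integrable v σ := (integrable_norm_iff hvm.aestronglyMeasurable).1 hvint
  refine ⟨⟨fun r hr => le_of_mem_insulationEnergies hvm hm hr, fun b hb => ?_⟩, fun hv₀ => ?_⟩
  · have hlim : Tendsto
        (fun ε => (I + ε * σ.real Set.univ) / m * ∫ x, v x ^ 2 / (|v x| + ε) ∂σ)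
        (𝓝[>] 0) (𝓝 (1 / m * I ^ 2)) := by
      have hmass : Tendsto (fun ε => (I + ε * σ.real Set.univ) / m) (𝓝[>] 0) (𝓝 (I / m)) := by
        simpa using ((continuous_const.add (continuous_id.mul continuous_const)).div_const m
          |>.tendsto 0).mono_left nhdsWithin_le_nhds
      convert hmass.mul (tendsto_integral_sq_div_abs_add hvm hvi) using 2
      ring
    exact ge_of_tendsto hlim (eventually_mem_nhdsWithin.mono fun ε hε =>
      hb (regularized_mem_insulationEnergies hvm hvi hvpos hm hε))
  · have hmin := integral_div_mul_integral_sq_div_mem_insulationEnergies (v := v) hvm.abs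
      (hv₀.mono fun x => abs_pos.2) hvint (by simpa only [sq_div_abs_self] using hvint) hvpos hm
    simp only [sq_div_abs_self] at hmin
    convert hmin using 1
    ring
end

section
/- Let H be a real vector space with two inner products B and L, and suppose (u_k) is a sequence of nonzero vectors satisfying ⟨u_{k+1}, φ⟩_B = R(u_k)⟨u_k, φ⟩_L for all φ ∈ H, where R(w) = ‖w‖_B²/‖w‖_L². Then the sequence k ↦ ‖u_k‖_B² / ‖u_k‖_L is nonincreasing. -/
/-- The quantity ‖u_k‖_B²/‖u_k‖_L is nonincreasing along the inverse iteration. -/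
theorem stmt_9 {V : Type*} [AddCommGroup V] [Module ℝ V]
    (B L : LinearMap.BilinForm ℝ V)
    (hBsymm : ∀ x y, B x y = B y x) (hLsymm : ∀ x y, L x y = L y x)
    (hBpos : ∀ x, x ≠ 0 → 0 < B x x) (hLpos : ∀ x, x ≠ 0 → 0 < L x x)
    (u : ℕ → V) (hne : ∀ k, u k ≠ 0)
    (hiter : ∀ k, ∀ φ : V,
      B (u (k + 1)) φ = (B (u k) (u k) / L (u k) (u k)) * L (u k) φ) :
    Antitone (fun k => B (u k) (u k) / Real.sqrt (L (u k) (u k))) := by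
  have hLnn : ∀ z : V, 0 ≤ L z z := by
    intro z
    by_cases hz : z = 0
    · simp [hz]
    · exact (hLpos z hz).le
  apply antitone_nat_of_succ_le
  intro k
  set x := u k
  set y := u (k + 1)
  set a := L x x with ha
  set c := L y y with hc
  set d := L x y with hd
  have ha0 : 0 < a := hLpos x (hne k)
  have hc0 : 0 < c := hLpos y (hne (k + 1))
  -- Cauchy–Schwarz for L
  have hCS : d ^ 2 ≤ a * c := by
    have h0 : 0 ≤ L (a • y - d • x) (a • y - d • x) := hLnn _
    have hsym : L y x = d := hLsymm y x
    simp only [map_sub, map_smul, LinearMap.sub_apply, LinearMap.smul_apply,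
      smul_eq_mul] at h0
    rw [← ha, ← hc, ← hd, hsym] at h0
    nlinarith [h0, ha0, sq_nonneg d]
  have hdle : d ≤ Real.sqrt a * Real.sqrt c := by
    have : d ≤ Real.sqrt (a * c) := by
      calc d ≤ |d| := le_abs_self d
      _ = Real.sqrt (d ^ 2) := (Real.sqrt_sq_eq_abs d).symm
      _ ≤ Real.sqrt (a * c) := Real.sqrt_le_sqrt (by nlinarith)
    simpa [Real.sqrt_mul ha0.le] using this
  set b := B x x with hb
  have hb0 : 0 < b := hBpos x (hne k)
  have hby : B y y = b / a * d := hiter k y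
  have hsa : 0 < Real.sqrt a := Real.sqrt_pos.mpr ha0
  have hsc : 0 < Real.sqrt c := Real.sqrt_pos.mpr hc0
  rw [div_le_div_iff₀ hsc hsa]
  have hsa2 : Real.sqrt a * Real.sqrt a = a := Real.mul_self_sqrt ha0.le
  have h1 : B y y ≤ b / a * (Real.sqrt a * Real.sqrt c) := by
    rw [hby]
    exact mul_le_mul_of_nonneg_left hdle (by positivity)
  calc B y y * Real.sqrt a ≤ b / a * (Real.sqrt a * Real.sqrt c) * Real.sqrt a :=
        mul_le_mul_of_nonneg_right h1 hsa.le
    _ = b / a * (Real.sqrt a * Real.sqrt a) * Real.sqrt c := by ring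
    _ = b * Real.sqrt c := by rw [hsa2]; field_simp
end

section
/- Let H be a Hilbert space with inner product B, let L be another inner product on H, and λ₁ > 0 with λ₁ ≤ R(w) = ‖w‖_B²/‖w‖_L² for all nonzero w. Suppose u_∞, w_∞ ∈ H are nonzero with ‖w_∞‖_L = ‖u_∞‖_L, and ⟨w_∞, φ⟩_B = λ₁⟨u_∞, φ⟩_L for all φ ∈ H. Then u_∞ = w_∞ and ⟨u_∞, φ⟩_B = λ₁⟨u_∞, φ⟩_L for all φ ∈ H, provided ⟨u_∞, w_∞⟩_L ≥ 0. -/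
/-- From ⟨w∞,φ⟩_B = λ₁⟨u∞,φ⟩_L with equal L-norms and ⟨u∞,w∞⟩_L ≥ 0,
conclude u∞ = w∞ and that u∞ is a weak eigenvector for λ₁. -/
theorem stmt_11 {V : Type*} [AddCommGroup V] [Module ℝ V]
    (B L : LinearMap.BilinForm ℝ V)
    (hBsymm : ∀ x y, B x y = B y x) (hLsymm : ∀ x y, L x y = L y x)
    (hBpos : ∀ x, x ≠ 0 → 0 < B x x) (hLpos : ∀ x, x ≠ 0 → 0 < L x x)
    (lam : ℝ) (hlam : 0 < lam)
    (hlow : ∀ w : V, w ≠ 0 → lam ≤ B w w / L w w)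
    (uinf winf : V) (hu : uinf ≠ 0) (hw : winf ≠ 0)
    (hnorm : Real.sqrt (L winf winf) = Real.sqrt (L uinf uinf))
    (hrel : ∀ φ : V, B winf φ = lam * L uinf φ)
    (hip : 0 ≤ L uinf winf) :
    uinf = winf ∧ ∀ φ : V, B uinf φ = lam * L uinf φ := by
  have hLw : 0 < L winf winf := hLpos _ hw
  have hLu : 0 < L uinf uinf := hLpos _ hu
  have hnorm' : L winf winf = L uinf uinf := by
    have := congrArg (fun x => x ^ 2) hnorm
    simpa [Real.sq_sqrt hLw.le, Real.sq_sqrt hLu.le] using this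
  -- λ L w w ≤ B w w = λ L u w
  have h1 : lam * L winf winf ≤ B winf winf := by
    have := hlow winf hw
    calc lam * L winf winf ≤ (B winf winf / L winf winf) * L winf winf := by
          exact mul_le_mul_of_nonneg_right this hLw.le
      _ = B winf winf := div_mul_cancel₀ _ hLw.ne'
  have h2 : L winf winf ≤ L uinf winf := by
    have h3 : lam * L winf winf ≤ lam * L uinf winf := by
      rw [← hrel winf]; exact h1
    exact le_of_mul_le_mul_left h3 hlam
  have heq : uinf = winf := by
    by_contra hne
    have hd : uinf - winf ≠ 0 := sub_ne_zero.mpr hne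
    have := hLpos _ hd
    have hexp : L (uinf - winf) (uinf - winf)
        = L uinf uinf - L uinf winf - L winf uinf + L winf winf := by
      simp [map_sub, LinearMap.sub_apply]; ring
    rw [hexp, hLsymm winf uinf, ← hnorm'] at this
    linarith
  subst heq
  exact ⟨rfl, hrel⟩
end

section
/- Let H be a Hilbert space under the norm ‖·‖_B induced by an inner product B, equivalent to the ambient norm, and let L be another continuous inner product on H. Suppose u_∞ ∈ H satisfies ⟨u_∞, φ⟩_B = λ₁⟨u_∞, φ⟩_L for all φ, and (u_k) satisfies ⟨u_{k+1}, φ⟩_B = R(u_k)⟨u_k, φ⟩_L for all φ, where R(u_k) → λ₁ and u_k → u_∞ in the L-norm with sup_k ‖u_k‖_L < ∞. Then ‖u_{k+1} − u_∞‖_B → 0. -/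
open Filter

/-- Cauchy–Schwarz for a symmetric nonnegative bilinear form. -/
lemma cs_aux13 {V : Type*} [AddCommGroup V] [Module ℝ V]
    (L : LinearMap.BilinForm ℝ V) (hsymm : ∀ x y, L x y = L y x)
    (hnn : ∀ x, 0 ≤ L x x) (x y : V) :
    |L x y| ≤ Real.sqrt (L x x) * Real.sqrt (L y y) := by
  have hd : discrim (L y y) (2 * L x y) (L x x) ≤ 0 := by
    apply discrim_le_zero
    intro t
    have h := hnn (t • y + x)
    simp only [map_add, map_smul, LinearMap.add_apply, LinearMap.smul_apply,
      smul_eq_mul] at h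
    rw [show (L y) x = (L x) y from (hsymm x y).symm] at h
    nlinarith
  rw [discrim] at hd
  have habs : |L x y| = Real.sqrt ((L x y) ^ 2) := (Real.sqrt_sq_eq_abs _).symm
  rw [habs, ← Real.sqrt_mul (hnn x)]
  exact Real.sqrt_le_sqrt (by nlinarith)

/-- Upgrade from L-convergence to strong B-convergence of the inverse iterates. -/
theorem stmt_13 {V : Type*} [AddCommGroup V] [Module ℝ V]
    (B L : LinearMap.BilinForm ℝ V)
    (hBsymm : ∀ x y, B x y = B y x) (hLsymm : ∀ x y, L x y = L y x)
    (hBpos : ∀ x, x ≠ 0 → 0 < B x x) (hLpos : ∀ x, x ≠ 0 → 0 < L x x)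
    (hLcont : ∃ c : ℝ, ∀ x y : V,
      |L x y| ≤ c * Real.sqrt (B x x) * Real.sqrt (B y y))
    (lam : ℝ) (uinf : V)
    (heig : ∀ φ : V, B uinf φ = lam * L uinf φ)
    (u : ℕ → V) (hne : ∀ k, u k ≠ 0)
    (hiter : ∀ k, ∀ φ : V,
      B (u (k + 1)) φ = (B (u k) (u k) / L (u k) (u k)) * L (u k) φ)
    (hR : Filter.Tendsto (fun k => B (u k) (u k) / L (u k) (u k))
      Filter.atTop (nhds lam))
    (hLconv : Filter.Tendsto
      (fun k => Real.sqrt (L (u k - uinf) (u k - uinf))) Filter.atTop (nhds 0))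
    (hbdd : ∃ M : ℝ, ∀ k, Real.sqrt (L (u k) (u k)) ≤ M) :
    Filter.Tendsto
      (fun k => Real.sqrt (B (u (k + 1) - uinf) (u (k + 1) - uinf)))
      Filter.atTop (nhds 0) := by
  obtain ⟨c, hc⟩ := hLcont
  set c' : ℝ := max c 0 with hc'def
  have hc'0 : 0 ≤ c' := le_max_right _ _
  have hBnn : ∀ x, 0 ≤ B x x := by
    intro x; rcases eq_or_ne x 0 with h | h
    · simp [h]
    · exact (hBpos x h).le
  have hLnn : ∀ x, 0 ≤ L x x := by
    intro x; rcases eq_or_ne x 0 with h | h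
    · simp [h]
    · exact (hLpos x h).le
  set R : ℕ → ℝ := fun k => B (u k) (u k) / L (u k) (u k) with hRdef
  set m : ℝ := Real.sqrt (L uinf uinf) with hmdef
  have hm0 : 0 ≤ m := Real.sqrt_nonneg _
  have key : ∀ k, Real.sqrt (B (u (k + 1) - uinf) (u (k + 1) - uinf))
      ≤ Real.sqrt c' * (|R k| * Real.sqrt (L (u k - uinf) (u k - uinf))
        + |R k - lam| * m) := by
    intro k
    set φ := u (k + 1) - uinf with hφdef
    have hBφ : B φ φ = R k * L (u k - uinf) φ + (R k - lam) * L uinf φ := by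
      have h1 : B φ φ = B (u (k + 1)) φ - B uinf φ := by
        simp only [hφdef, map_sub, LinearMap.sub_apply]; ring
      have h2 : L (u k - uinf) φ = L (u k) φ - L uinf φ := by
        simp only [hφdef, map_sub, LinearMap.sub_apply]; ring
      rw [h1, hiter k φ, heig φ, h2]; ring
    set t := Real.sqrt (B φ φ) with htdef
    have ht0 : 0 ≤ t := Real.sqrt_nonneg _
    have ht2 : t ^ 2 = B φ φ := Real.sq_sqrt (hBnn φ)
    -- bound √(L φ φ) ≤ √c' * t
    have hφL : Real.sqrt (L φ φ) ≤ Real.sqrt c' * t := by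
      have h1 : L φ φ ≤ c' * B φ φ := by
        have := hc φ φ
        have h2 : c * Real.sqrt (B φ φ) * Real.sqrt (B φ φ) ≤ c' * B φ φ := by
          have := Real.sq_sqrt (hBnn φ)
          nlinarith [hBnn φ, le_max_left c 0]
        calc L φ φ ≤ |L φ φ| := le_abs_self _
          _ ≤ c * Real.sqrt (B φ φ) * Real.sqrt (B φ φ) := hc φ φ
          _ ≤ c' * B φ φ := h2
      calc Real.sqrt (L φ φ) ≤ Real.sqrt (c' * B φ φ) := Real.sqrt_le_sqrt h1
        _ = Real.sqrt c' * t := by rw [Real.sqrt_mul hc'0]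
    set A : ℝ := |R k| * Real.sqrt (L (u k - uinf) (u k - uinf)) + |R k - lam| * m
      with hAdef
    have hA0 : 0 ≤ A := by positivity
    have hmain : t ^ 2 ≤ A * (Real.sqrt c' * t) := by
      have e1 := cs_aux13 L hLsymm hLnn (u k - uinf) φ
      have e2 := cs_aux13 L hLsymm hLnn uinf φ
      have b1 : R k * L (u k - uinf) φ ≤ |R k| * (Real.sqrt (L (u k - uinf) (u k - uinf)) * Real.sqrt (L φ φ)) := by
        calc R k * L (u k - uinf) φ ≤ |R k * L (u k - uinf) φ| := le_abs_self _
          _ = |R k| * |L (u k - uinf) φ| := abs_mul _ _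
          _ ≤ _ := by
            apply mul_le_mul_of_nonneg_left e1 (abs_nonneg _)
      have b2 : (R k - lam) * L uinf φ ≤ |R k - lam| * (m * Real.sqrt (L φ φ)) := by
        calc (R k - lam) * L uinf φ ≤ |(R k - lam) * L uinf φ| := le_abs_self _
          _ = |R k - lam| * |L uinf φ| := abs_mul _ _
          _ ≤ _ := mul_le_mul_of_nonneg_left e2 (abs_nonneg _)
      have hsq : Real.sqrt (L φ φ) ≤ Real.sqrt c' * t := hφL
      have hsqnn : 0 ≤ Real.sqrt (L φ φ) := Real.sqrt_nonneg _
      have : B φ φ ≤ A * Real.sqrt (L φ φ) := by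
        rw [hBφ, hAdef]; nlinarith [abs_nonneg (R k), abs_nonneg (R k - lam),
          Real.sqrt_nonneg (L (u k - uinf) (u k - uinf)), hm0]
      calc t ^ 2 = B φ φ := ht2
        _ ≤ A * Real.sqrt (L φ φ) := this
        _ ≤ A * (Real.sqrt c' * t) := mul_le_mul_of_nonneg_left hsq hA0
    -- conclude t ≤ √c' * A
    rcases ht0.eq_or_lt with h | h
    · rw [← h]; positivity
    · nlinarith
  have hlim : Filter.Tendsto
      (fun k => Real.sqrt c' * (|R k| * Real.sqrt (L (u k - uinf) (u k - uinf))
        + |R k - lam| * m)) Filter.atTop (nhds 0) := by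
    have h1 : Filter.Tendsto (fun k => |R k|) Filter.atTop (nhds |lam|) := hR.abs
    have h2 : Filter.Tendsto (fun k => |R k - lam|) Filter.atTop (nhds 0) := by
      have := (hR.sub_const lam).abs
      simpa using this
    have := ((h1.mul hLconv).add (h2.mul_const m)).const_mul (Real.sqrt c')
    simpa using this
  exact squeeze_zero (fun k => Real.sqrt_nonneg _) key hlim
end
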